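/- Let T ∈ Aut(X,μ) be aperiodic. Every element S ∈ [T]_com can be written as a product S = S_p S_+ S_− of three elements of [T]_com with pairwise disjoint supports, where S_p is periodic, S_+ is almost positive, and S_− is almost negative. -/

import Mathlib

/- # Preliminaries: the group `Aut(X,[μ])` of measure-class preserving transformations
   modulo a.e. equality, full groups, and the commensurating full group. -/

open MeasureTheory Filter Set

namespace CfgPaper

variable {X : Type*} [MeasurableSpace X]

/-- The group of bimeasurable bijections of `X` (composition as multiplication). -/
instance : Group (X ≃ᵐ X) where
  mul a b := b.trans a
  one := MeasurableEquiv.refl X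
  inv := MeasurableEquiv.symm
  mul_assoc a b c := rfl
  one_mul a := rfl
  mul_one a := rfl
  inv_mul_cancel a := by ext x; exact a.symm_apply_apply x

/-- The subgroup of bimeasurable bijections preserving the measure class of `μ`
(pointwise representatives, not yet identified a.e.). -/
def MCP (μ : Measure X) : Subgroup (X ≃ᵐ X) where
  carrier := {T | μ.map T ≪ μ ∧ μ ≪ μ.map T}
  one_mem' := by
    simp only [Set.mem_setOf_eq]
    rw [show ⇑(1 : X ≃ᵐ X) = id from rfl, Measure.map_id]
    exact ⟨Measure.AbsolutelyContinuous.rfl, Measure.AbsolutelyContinuous.rfl⟩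
  mul_mem' := by
    rintro a b ⟨ha1, ha2⟩ ⟨hb1, hb2⟩
    have hmap : μ.map (a * b) = (μ.map b).map a := by
      rw [show ⇑(a * b) = ⇑a ∘ ⇑b from rfl, ← Measure.map_map a.measurable b.measurable]
    constructor
    · rw [hmap]
      exact (hb1.map a.measurable).trans ha1
    · rw [hmap]
      exact ha2.trans (hb2.map a.measurable)
  inv_mem' := by
    rintro a ⟨ha1, ha2⟩
    have hid : μ.map (⇑a.symm ∘ ⇑a) = μ := by
      rw [MeasurableEquiv.symm_comp_self, Measure.map_id]
    have hmap : (μ.map a).map a.symm = μ := by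
      rw [Measure.map_map a.symm.measurable a.measurable, hid]
    constructor
    · calc μ.map ⇑a⁻¹ = μ.map a.symm := rfl
        _ ≪ (μ.map a).map a.symm := ha2.map a.symm.measurable
        _ = μ := hmap
    · calc μ = (μ.map a).map a.symm := hmap.symm
        _ ≪ μ.map a.symm := ha1.map a.symm.measurable
        _ = μ.map ⇑a⁻¹ := rfl

variable (μ : Measure X)

lemma MCP.qmp (T : MCP μ) : Measure.QuasiMeasurePreserving (⇑(T : X ≃ᵐ X)) μ μ :=
  ⟨(T : X ≃ᵐ X).measurable, T.2.1⟩

/-- The normal subgroup of transformations a.e. equal to the identity. -/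
def AeId : Subgroup (MCP μ) where
  carrier := {T | ∀ᵐ x ∂μ, ((T : X ≃ᵐ X)) x = x}
  one_mem' := by
    show ∀ᵐ x ∂μ, ((1 : X ≃ᵐ X)) x = x
    exact Filter.Eventually.of_forall fun x => rfl
  mul_mem' := by
    rintro a b ha hb
    have hnull : μ {y | ((a : X ≃ᵐ X)) y ≠ y} = 0 := by
      rw [← MeasureTheory.ae_iff]; exact ha
    have h1 : μ ((⇑(b : X ≃ᵐ X)) ⁻¹' {y | ((a : X ≃ᵐ X)) y ≠ y}) = 0 :=
      (MCP.qmp μ b).preimage_null hnull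
    have h2 : μ {x | ((b : X ≃ᵐ X)) x ≠ x} = 0 := by
      rw [← MeasureTheory.ae_iff]; exact hb
    have hsub : {x | ((((a * b : MCP μ) : X ≃ᵐ X))) x ≠ x} ⊆
        ((⇑(b : X ≃ᵐ X)) ⁻¹' {y | ((a : X ≃ᵐ X)) y ≠ y}) ∪ {x | ((b : X ≃ᵐ X)) x ≠ x} := by
      intro x hx
      by_contra hc
      simp only [Set.mem_union, Set.mem_preimage, Set.mem_setOf_eq, not_or, not_not] at hc
      obtain ⟨h₁, h₂⟩ := hc
      exact hx (by
        show ((a : X ≃ᵐ X)) (((b : X ≃ᵐ X)) x) = x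
        exact h₁.trans h₂)
    show ∀ᵐ x ∂μ, (((a * b : MCP μ) : X ≃ᵐ X)) x = x
    rw [MeasureTheory.ae_iff]
    exact measure_mono_null hsub (by
      exact le_antisymm ((measure_union_le _ _).trans (by rw [h1, h2]; simp)) zero_le)
  inv_mem' := by
    rintro a ha
    have hnull : μ {y | ((a : X ≃ᵐ X)) y ≠ y} = 0 := by
      rw [← MeasureTheory.ae_iff]; exact ha
    have h1 : μ ((⇑((a⁻¹ : MCP μ) : X ≃ᵐ X)) ⁻¹' {y | ((a : X ≃ᵐ X)) y ≠ y}) = 0 :=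
      (MCP.qmp μ a⁻¹).preimage_null hnull
    show ∀ᵐ x ∂μ, (((a⁻¹ : MCP μ) : X ≃ᵐ X)) x = x
    rw [MeasureTheory.ae_iff]
    refine measure_mono_null ?_ h1
    intro x hx
    rw [Set.mem_preimage, Set.mem_setOf_eq]
    intro hc
    apply hx
    show ((a⁻¹ : MCP μ) : X ≃ᵐ X) x = x
    have : ((a : X ≃ᵐ X)) (((a⁻¹ : MCP μ) : X ≃ᵐ X) x) = x := by
      show ((a : X ≃ᵐ X)) (((a : X ≃ᵐ X)).symm x) = x
      exact (a : X ≃ᵐ X).apply_symm_apply x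
    rw [hc] at this
    exact this

instance : (AeId μ).Normal := by
  constructor
  intro n hn g
  have hnull : μ {y | ((n : X ≃ᵐ X)) y ≠ y} = 0 := by
    rw [← MeasureTheory.ae_iff]; exact hn
  have h1 : μ ((⇑((g⁻¹ : MCP μ) : X ≃ᵐ X)) ⁻¹' {y | ((n : X ≃ᵐ X)) y ≠ y}) = 0 :=
    (MCP.qmp μ g⁻¹).preimage_null hnull
  show ∀ᵐ x ∂μ, (((g * n * g⁻¹ : MCP μ) : X ≃ᵐ X)) x = x
  rw [MeasureTheory.ae_iff]
  refine measure_mono_null ?_ h1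
  intro x hx
  rw [Set.mem_preimage, Set.mem_setOf_eq]
  intro hc
  apply hx
  show ((g : X ≃ᵐ X)) (((n : X ≃ᵐ X)) (((g⁻¹ : MCP μ) : X ≃ᵐ X) x)) = x
  rw [hc]
  show ((g : X ≃ᵐ X)) (((g : X ≃ᵐ X)).symm x) = x
  exact (g : X ≃ᵐ X).apply_symm_apply x

/-- `Aut(X,[μ])`: measure-class preserving transformations modulo a.e. equality. -/
def AutMod := MCP μ ⧸ AeId μ

noncomputable instance : Group (AutMod μ) :=
  QuotientGroup.Quotient.group (AeId μ)

/-- The class of a representative in `Aut(X,[μ])`. -/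
def toMod (T : MCP μ) : AutMod μ := QuotientGroup.mk T

/- ## Dynamical notions (on representatives) -/

/-- The (two-sided) orbit of `x` under `T`. -/
def orbitZ (T : X ≃ᵐ X) (x : X) : Set X := {y | ∃ n : ℤ, (T ^ n) x = y}

/-- `S` belongs to the full group of `T` (a.e. representative version): a.e. every point is
moved by `S` to a point of its `T`-orbit. -/
def InFull (T S : X ≃ᵐ X) : Prop := ∀ᵐ x ∂μ, ∃ n : ℤ, S x = (T ^ n) x

/-- `ℕ` viewed inside `ℤ`. -/
def NN : Set ℤ := {n : ℤ | 0 ≤ n}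

/-- The image of a set `M ⊆ ℤ` of `T`-exponents at `x` under the permutation of the
`T`-orbit of `x` induced by `S`: the set of `m` such that `T^m x ∈ S (T^M x)`. -/
def permImage (T S : X ≃ᵐ X) (x : X) (M : Set ℤ) : Set ℤ :=
  {m : ℤ | ∃ n ∈ M, S ((T ^ n) x) = (T ^ m) x}

/-- The image of `ℕ` under the permutation of the `T`-orbit of `x` induced by `S`. -/
def fwdSet (T S : X ≃ᵐ X) (x : X) : Set ℤ := permImage T S x NN

/-- `S` lies in the commensurating full group of `T` (representative version):
`S ∈ [T]` and for a.e. `x` the permutation of the `T`-orbit induced by `S` commensurates `ℕ`. -/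
def IsCommRep (T S : X ≃ᵐ X) : Prop :=
  InFull μ T S ∧ ∀ᵐ x ∂μ, (symmDiff (fwdSet T S x) NN).Finite

/-- The pointwise index of `S` at `x`: `|ℕ ∖ σ(ℕ)| - |σ(ℕ) ∖ ℕ|` for the induced permutation. -/
noncomputable def ptIndex (T S : X ≃ᵐ X) (x : X) : ℤ :=
  ((NN \ fwdSet T S x).ncard : ℤ) - ((fwdSet T S x \ NN).ncard : ℤ)

/- ## Quotient-level notions -/

/-- The full group `[𝕋] ⊆ Aut(X,[μ])`. -/
def FullSet (𝕋 : AutMod μ) : Set (AutMod μ) :=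
  {𝕊 | ∃ T S : MCP μ, toMod μ T = 𝕋 ∧ toMod μ S = 𝕊 ∧ InFull μ (T : X ≃ᵐ X) (S : X ≃ᵐ X)}

/-- The commensurating full group `[𝕋]_com ⊆ Aut(X,[μ])` (as a set). -/
def CommFullSet (𝕋 : AutMod μ) : Set (AutMod μ) :=
  {𝕊 | ∃ T S : MCP μ, toMod μ T = 𝕋 ∧ toMod μ S = 𝕊 ∧ IsCommRep μ (T : X ≃ᵐ X) (S : X ≃ᵐ X)}

/-- `𝕊` is periodic: a.e. orbit is finite. -/
def PeriodicMod (𝕊 : AutMod μ) : Prop :=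
  ∃ S : MCP μ, toMod μ S = 𝕊 ∧ ∀ᵐ x ∂μ, (orbitZ (S : X ≃ᵐ X) x).Finite

/-- `𝕋` is aperiodic: a.e. orbit is infinite. -/
def AperiodicMod (𝕋 : AutMod μ) : Prop :=
  ∃ T : MCP μ, toMod μ T = 𝕋 ∧ ∀ᵐ x ∂μ, (orbitZ (T : X ≃ᵐ X) x).Infinite

/-- `𝕋` is ergodic: every invariant Borel set is null or conull. -/
def ErgodicMod (𝕋 : AutMod μ) : Prop :=
  ∃ T : MCP μ, toMod μ T = 𝕋 ∧ PreErgodic (⇑(T : X ≃ᵐ X)) μ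

/-- The index map of `[𝕋]_com` takes the value `k` at `𝕊`. -/
def HasIndexMod (𝕋 𝕊 : AutMod μ) (k : ℤ) : Prop :=
  ∃ T S : MCP μ, toMod μ T = 𝕋 ∧ toMod μ S = 𝕊 ∧
    ∀ᵐ x ∂μ, ptIndex (T : X ≃ᵐ X) (S : X ≃ᵐ X) x = k

/- ## The Polish topology on `[𝕋]_com` (convergence in measure of induced permutations) -/

/-- An encoding of the countable set `Comm(ℕ)` of subsets of `ℤ` commensurated to `ℕ`. -/
noncomputable def encComm (M : {A : Set ℤ // (symmDiff A NN).Finite}) : ℕ :=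
  Encodable.encode M.2.toFinset

/-- A compatible distance between representatives: a weighted sum, over the subsets `M`
commensurated to `ℕ`, of the measure of the set of points where the permutations induced
by `S₁` and `S₂` (or their inverses) on the `T`-orbit disagree on `M`. This metrizes the
topology of convergence in measure in `L⁰(X, Sym(ℤ,ℕ))` of the induced permutations. -/
noncomputable def repDist (T S₁ S₂ : X ≃ᵐ X) : ℝ :=
  ∑' M : {A : Set ℤ // (symmDiff A NN).Finite},
    (1 / 2 : ℝ) ^ (encComm M + 1) *
      ((μ {x | permImage T S₁ x M.1 ≠ permImage T S₂ x M.1}).toReal +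
        (μ {x | permImage T S₁.symm x M.1 ≠ permImage T S₂.symm x M.1}).toReal)

/-- The induced distance on `Aut(X,[μ])` (independent of the chosen representatives). -/
noncomputable def qDist (𝕋 𝕊₁ 𝕊₂ : AutMod μ) : ℝ :=
  ⨅ (T : MCP μ) (_ : toMod μ T = 𝕋) (S₁ : MCP μ) (_ : toMod μ S₁ = 𝕊₁)
    (S₂ : MCP μ) (_ : toMod μ S₂ = 𝕊₂), repDist μ (T : X ≃ᵐ X) (S₁ : X ≃ᵐ X) (S₂ : X ≃ᵐ X)

/-- The Polish topology of `[𝕋]_com`, generated by the balls of the distance above. -/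
noncomputable def cfgTop (𝕋 : AutMod μ) :
    TopologicalSpace {𝕊 : AutMod μ // 𝕊 ∈ CommFullSet μ 𝕋} :=
  TopologicalSpace.generateFrom
    {U | ∃ (S₀ : {𝕊 : AutMod μ // 𝕊 ∈ CommFullSet μ 𝕋}) (ε : ℝ), 0 < ε ∧
      U = {S | qDist μ 𝕋 S₀.1 S.1 < ε}}

/-- The derived subgroup of `[𝕋]_com` (generated by commutators of its elements). -/
noncomputable def derivedCfg (𝕋 : AutMod μ) : Subgroup (AutMod μ) :=
  Subgroup.closure
    {g | ∃ a ∈ CommFullSet μ 𝕋, ∃ b ∈ CommFullSet μ 𝕋, g = a * b * a⁻¹ * b⁻¹}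

/-- The topological derived subgroup `D([𝕋]_com)‾`: the closure, in `[𝕋]_com`,
of the derived subgroup. -/
noncomputable def DbarSet (𝕋 : AutMod μ) : Set {𝕊 : AutMod μ // 𝕊 ∈ CommFullSet μ 𝕋} :=
  @closure _ (cfgTop μ 𝕋) {S | S.1 ∈ derivedCfg μ 𝕋}

/- ## Statement 14 -/

variable {X : Type*} [MeasurableSpace X]

/-- `𝕊` is almost positive over `𝕋`: for a.e. `x` in the support of `𝕊`, the `T`-coordinate
of `Sⁿ(x)` tends to `+∞` as `n → +∞`. -/
def AlmostPosMod (μ : Measure X) (𝕋 𝕊 : AutMod μ) : Prop :=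
  ∃ T S : MCP μ, toMod μ T = 𝕋 ∧ toMod μ S = 𝕊 ∧
    ∀ᵐ x ∂μ, ((S : X ≃ᵐ X)) x ≠ x →
      ∀ K : ℤ, ∃ N : ℕ, ∀ n : ℕ, N ≤ n →
        ∀ m : ℤ, (((S : X ≃ᵐ X)) ^ n) x = (((T : X ≃ᵐ X)) ^ m) x → K ≤ m

/-- `𝕊` is almost negative over `𝕋`: for a.e. `x` in the support of `𝕊`, the `T`-coordinate
of `Sⁿ(x)` tends to `-∞` as `n → +∞`. -/
def AlmostNegMod (μ : Measure X) (𝕋 𝕊 : AutMod μ) : Prop :=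
  ∃ T S : MCP μ, toMod μ T = 𝕋 ∧ toMod μ S = 𝕊 ∧
    ∀ᵐ x ∂μ, ((S : X ≃ᵐ X)) x ≠ x →
      ∀ K : ℤ, ∃ N : ℕ, ∀ n : ℕ, N ≤ n →
        ∀ m : ℤ, (((S : X ≃ᵐ X)) ^ n) x = (((T : X ≃ᵐ X)) ^ m) x → m ≤ K

/-- `𝕊₁` and `𝕊₂` have (essentially) disjoint supports. -/
def DisjSuppMod (μ : Measure X) (𝕊₁ 𝕊₂ : AutMod μ) : Prop :=
  ∃ S₁ S₂ : MCP μ, toMod μ S₁ = 𝕊₁ ∧ toMod μ S₂ = 𝕊₂ ∧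
    μ ({x | ((S₁ : X ≃ᵐ X)) x ≠ x} ∩ {x | ((S₂ : X ≃ᵐ X)) x ≠ x}) = 0

/- ## Auxiliary development for the proof -/

section Aux

variable {Y : Type*} [MeasurableSpace Y]

lemma mulApply (a b : Y ≃ᵐ Y) (x : Y) : (a * b) x = a (b x) := rfl

lemma invApply (a : Y ≃ᵐ Y) (x : Y) : (a⁻¹ : Y ≃ᵐ Y) x = a.symm x := rfl

lemma oneApply (x : Y) : (1 : Y ≃ᵐ Y) x = x := rfl

lemma powSuccApply (a : Y ≃ᵐ Y) (n : ℕ) (x : Y) : (a ^ (n + 1)) x = (a ^ n) (a x) := by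
  rw [pow_succ]; rfl

lemma powSuccApply' (a : Y ≃ᵐ Y) (n : ℕ) (x : Y) : (a ^ (n + 1)) x = a ((a ^ n) x) := by
  rw [pow_succ']; rfl

lemma zpowAddApply (a : Y ≃ᵐ Y) (m n : ℤ) (x : Y) :
    (a ^ (m + n)) x = (a ^ m) ((a ^ n) x) := by
  rw [zpow_add]; rfl

lemma zpow_fix (a : Y ≃ᵐ Y) {x : Y} (hx : a x = x) : ∀ n : ℤ, (a ^ n) x = x := by
  have hinv : a.symm x = x := by conv_lhs => rw [← hx]; rw [a.symm_apply_apply]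
  intro n
  induction n using Int.induction_on with
  | zero => rfl
  | succ k ih => rw [zpowAddApply a k 1 x]; simp only [zpow_one]; rw [hx, ih]
  | pred k ih =>
      have : (-(k : ℤ) - 1) = (-1) + (-(k : ℤ)) := by ring
      rw [this, zpowAddApply, ih]
      show (a ^ (-1 : ℤ)) x = x
      rw [zpow_neg, zpow_one]
      exact hinv

lemma zpow_period_mul (a : Y ≃ᵐ Y) {x : Y} {k : ℤ} (hx : (a ^ k) x = x) (q : ℤ) :
    (a ^ (k * q)) x = x := by
  have := zpow_fix (a ^ k) hx q
  rwa [← zpow_mul] at this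

lemma orbit_finite_of_period (a : Y ≃ᵐ Y) {x : Y} {k : ℤ} (hk : 0 < k)
    (hx : (a ^ k) x = x) : (orbitZ a x).Finite := by
  have hsub : orbitZ a x ⊆ (fun j : ℤ => (a ^ j) x) '' (Set.Icc 0 (k - 1)) := by
    rintro y ⟨n, rfl⟩
    refine ⟨n % k, ⟨Int.emod_nonneg n hk.ne', by have := Int.emod_lt_of_pos n hk; omega⟩, ?_⟩
    have hdecomp : (a ^ n) x = (a ^ (n % k)) ((a ^ (k * (n / k))) x) := by
      rw [← zpowAddApply, Int.emod_add_mul_ediv]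
    show (a ^ (n % k)) x = (a ^ n) x
    rw [hdecomp, zpow_period_mul a hx (n / k)]
  exact ((Set.finite_Icc _ _).image _).subset hsub

lemma coord_unique (a : Y ≃ᵐ Y) {x : Y} (hx : (orbitZ a x).Infinite) {m n : ℤ}
    (h : (a ^ m) x = (a ^ n) x) : m = n := by
  by_contra hmn
  have key : ∀ p q : ℤ, p < q → (a ^ p) x = (a ^ q) x → False := by
    intro p q hpq hpqe
    have hfix : (a ^ (q - p)) x = x := by
      have h1 : (a ^ (-p + q)) x = (a ^ (-p : ℤ)) ((a ^ q) x) := zpowAddApply a (-p) q x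
      have h2 : (a ^ (-p : ℤ)) ((a ^ p) x) = x := by
        rw [← zpowAddApply, neg_add_cancel, zpow_zero, oneApply]
      rw [← hpqe] at h1
      rw [h2] at h1
      have : q - p = -p + q := by ring
      rw [this, h1]
    exact hx (orbit_finite_of_period a (by omega) hfix)
  rcases lt_or_gt_of_ne hmn with hlt | hlt
  · exact key m n hlt h
  · exact key n m hlt h.symm

open Classical in
/-- Restriction of a measurable equivalence to an invariant measurable set. -/
noncomputable def restrictEquiv (S : Y ≃ᵐ Y) (A : Set Y) (hA : MeasurableSet A)
    (h1 : ∀ x ∈ A, S x ∈ A) (h2 : ∀ x ∈ A, S.symm x ∈ A) : Y ≃ᵐ Y where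
  toFun := fun x => if x ∈ A then S x else x
  invFun := fun x => if x ∈ A then S.symm x else x
  left_inv := by
    intro x
    by_cases hx : x ∈ A
    · simp only [hx, if_true, h1 x hx, if_pos (h1 x hx), S.symm_apply_apply]
    · simp only [hx, if_false, if_neg hx]
  right_inv := by
    intro x
    by_cases hx : x ∈ A
    · simp only [hx, if_true, h2 x hx, if_pos (h2 x hx), S.apply_symm_apply]
    · simp only [hx, if_false, if_neg hx]
  measurable_toFun := Measurable.ite hA S.measurable measurable_id
  measurable_invFun := Measurable.ite hA S.symm.measurable measurable_id

lemma restrictEquiv_apply_of_mem (S : Y ≃ᵐ Y) (A : Set Y) (hA : MeasurableSet A)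
    (h1 : ∀ x ∈ A, S x ∈ A) (h2 : ∀ x ∈ A, S.symm x ∈ A) {x : Y} (hx : x ∈ A) :
    restrictEquiv S A hA h1 h2 x = S x := if_pos hx

lemma restrictEquiv_apply_of_not_mem (S : Y ≃ᵐ Y) (A : Set Y) (hA : MeasurableSet A)
    (h1 : ∀ x ∈ A, S x ∈ A) (h2 : ∀ x ∈ A, S.symm x ∈ A) {x : Y} (hx : x ∉ A) :
    restrictEquiv S A hA h1 h2 x = x := if_neg hx

lemma restrictEquiv_symm_apply_of_mem (S : Y ≃ᵐ Y) (A : Set Y) (hA : MeasurableSet A)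
    (h1 : ∀ x ∈ A, S x ∈ A) (h2 : ∀ x ∈ A, S.symm x ∈ A) {x : Y} (hx : x ∈ A) :
    (restrictEquiv S A hA h1 h2).symm x = S.symm x := if_pos hx

lemma restrictEquiv_symm_apply_of_not_mem (S : Y ≃ᵐ Y) (A : Set Y) (hA : MeasurableSet A)
    (h1 : ∀ x ∈ A, S x ∈ A) (h2 : ∀ x ∈ A, S.symm x ∈ A) {x : Y} (hx : x ∉ A) :
    (restrictEquiv S A hA h1 h2).symm x = x := if_neg hx

lemma restrictEquiv_pow_of_mem (S : Y ≃ᵐ Y) (A : Set Y) (hA : MeasurableSet A)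
    (h1 : ∀ x ∈ A, S x ∈ A) (h2 : ∀ x ∈ A, S.symm x ∈ A) {x : Y} (hx : x ∈ A) :
    ∀ n : ℕ, ((restrictEquiv S A hA h1 h2) ^ n) x = (S ^ n) x ∧ (S ^ n) x ∈ A := by
  intro n
  induction n with
  | zero => exact ⟨rfl, hx⟩
  | succ k ih =>
      obtain ⟨ihe, ihm⟩ := ih
      constructor
      · rw [powSuccApply', ihe, restrictEquiv_apply_of_mem S A hA h1 h2 ihm, powSuccApply']
      · rw [powSuccApply']
        exact h1 _ ihm

variable {ν : Measure Y}

lemma toMod_eq_of_ae (A B : MCP ν) (h : ∀ᵐ x ∂ν, (A : Y ≃ᵐ Y) x = (B : Y ≃ᵐ Y) x) :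
    toMod ν A = toMod ν B := by
  show QuotientGroup.mk A = QuotientGroup.mk B
  rw [QuotientGroup.eq]
  show ∀ᵐ x ∂ν, ((A⁻¹ * B : MCP ν) : Y ≃ᵐ Y) x = x
  filter_upwards [h] with x hx
  show (A : Y ≃ᵐ Y).symm ((B : Y ≃ᵐ Y) x) = x
  rw [← hx, (A : Y ≃ᵐ Y).symm_apply_apply]

lemma ae_eq_of_toMod_eq (A B : MCP ν) (h : toMod ν A = toMod ν B) :
    ∀ᵐ x ∂ν, (A : Y ≃ᵐ Y) x = (B : Y ≃ᵐ Y) x := by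
  have h' : A⁻¹ * B ∈ AeId ν := by
    rw [← QuotientGroup.eq]
    exact h
  have h'' : ∀ᵐ x ∂ν, ((A⁻¹ * B : MCP ν) : Y ≃ᵐ Y) x = x := h'
  filter_upwards [h''] with x hx
  have : (A : Y ≃ᵐ Y).symm ((B : Y ≃ᵐ Y) x) = x := hx
  calc (A : Y ≃ᵐ Y) x = (A : Y ≃ᵐ Y) ((A : Y ≃ᵐ Y).symm ((B : Y ≃ᵐ Y) x)) := by rw [this]
    _ = (B : Y ≃ᵐ Y) x := (A : Y ≃ᵐ Y).apply_symm_apply _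

lemma toMod_mul (A B : MCP ν) : toMod ν (A * B) = toMod ν A * toMod ν B := rfl

/-- Transfer of a.e. equality to all integer powers along a saturated conull set. -/
lemma ae_zpow_eq (A B : MCP ν) (h : ∀ᵐ x ∂ν, (A : Y ≃ᵐ Y) x = (B : Y ≃ᵐ Y) x) :
    ∀ᵐ x ∂ν, ∀ n : ℤ, ((A : Y ≃ᵐ Y) ^ n) x = ((B : Y ≃ᵐ Y) ^ n) x := by
  set Nb : Set Y := {x | (A : Y ≃ᵐ Y) x ≠ (B : Y ≃ᵐ Y) x} with hNb
  have hNbnull : ν Nb = 0 := by rw [← MeasureTheory.ae_iff] at *; exact h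
  set M : Set Y := ⋃ n : ℤ, (⇑((B : Y ≃ᵐ Y) ^ n)) ⁻¹' Nb with hM
  have hMnull : ν M = 0 := by
    refine measure_iUnion_null fun n => ?_
    have : ((B ^ n : MCP ν) : Y ≃ᵐ Y) = (B : Y ≃ᵐ Y) ^ n := rfl
    have hq := MCP.qmp ν (B ^ n)
    rw [this] at hq
    exact hq.preimage_null hNbnull
  rw [MeasureTheory.ae_iff]
  refine measure_mono_null ?_ hMnull
  intro x hx
  simp only [Set.mem_setOf_eq] at hx
  by_contra hxM
  apply hx
  have hgood : ∀ n : ℤ, ((B : Y ≃ᵐ Y) ^ n) x ∉ Nb := by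
    intro n hn
    exact hxM (Set.mem_iUnion.2 ⟨n, hn⟩)
  have hBeq : ∀ y, y ∉ Nb → (A : Y ≃ᵐ Y) y = (B : Y ≃ᵐ Y) y := by
    intro y hy
    by_contra hc
    exact hy hc
  have applyOne : ∀ (C : MCP ν) (y : Y), ((C : Y ≃ᵐ Y) ^ (1 : ℤ)) y = (C : Y ≃ᵐ Y) y := by
    intro C y
    rw [zpow_one]
  have applyNegOne : ∀ (C : MCP ν) (y : Y),
      ((C : Y ≃ᵐ Y) ^ (-1 : ℤ)) y = (C : Y ≃ᵐ Y).symm y := by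
    intro C y
    rw [zpow_neg, zpow_one]
    rfl
  intro n
  induction n using Int.induction_on with
  | zero => rfl
  | succ k ih =>
      have e1 : ((A : Y ≃ᵐ Y) ^ ((k : ℤ) + 1)) x
          = ((A : Y ≃ᵐ Y) ^ (1 : ℤ)) (((A : Y ≃ᵐ Y) ^ (k : ℤ)) x) := by
        rw [add_comm, zpowAddApply]
      have e2 : ((B : Y ≃ᵐ Y) ^ ((k : ℤ) + 1)) x
          = ((B : Y ≃ᵐ Y) ^ (1 : ℤ)) (((B : Y ≃ᵐ Y) ^ (k : ℤ)) x) := by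
        rw [add_comm, zpowAddApply]
      rw [e1, e2, applyOne, applyOne, ih, hBeq _ (hgood k)]
  | pred k ih =>
      have hd : (-(k : ℤ) - 1) = (-1) + (-(k : ℤ)) := by ring
      have e1 : ((A : Y ≃ᵐ Y) ^ (-(k : ℤ) - 1)) x
          = (A : Y ≃ᵐ Y).symm (((A : Y ≃ᵐ Y) ^ (-(k : ℤ))) x) := by
        rw [hd, zpowAddApply, applyNegOne]
      have e2 : ((B : Y ≃ᵐ Y) ^ (-(k : ℤ) - 1)) x
          = (B : Y ≃ᵐ Y).symm (((B : Y ≃ᵐ Y) ^ (-(k : ℤ))) x) := by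
        rw [hd, zpowAddApply, applyNegOne]
      set y := ((B : Y ≃ᵐ Y) ^ (-(k : ℤ))) x with hy
      rw [e1, e2, ih]
      have hz : (B : Y ≃ᵐ Y).symm y ∉ Nb := by
        rw [← e2]
        exact hgood _
      have hAB : (A : Y ≃ᵐ Y) ((B : Y ≃ᵐ Y).symm y) = (B : Y ≃ᵐ Y) ((B : Y ≃ᵐ Y).symm y) :=
        hBeq _ hz
      rw [(B : Y ≃ᵐ Y).apply_symm_apply] at hAB
      conv_lhs => rw [← hAB]
      rw [(A : Y ≃ᵐ Y).symm_apply_apply]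

lemma aperiodic_transfer (A B : MCP ν) (h : toMod ν A = toMod ν B)
    (hB : ∀ᵐ x ∂ν, (orbitZ (B : Y ≃ᵐ Y) x).Infinite) :
    ∀ᵐ x ∂ν, (orbitZ (A : Y ≃ᵐ Y) x).Infinite := by
  have h1 := ae_zpow_eq A B (ae_eq_of_toMod_eq A B h)
  filter_upwards [h1, hB] with x hx hBx
  have : orbitZ (A : Y ≃ᵐ Y) x = orbitZ (B : Y ≃ᵐ Y) x := by
    ext y
    constructor
    · rintro ⟨n, rfl⟩; exact ⟨n, (hx n).symm⟩
    · rintro ⟨n, rfl⟩; exact ⟨n, hx n⟩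
  rw [this]
  exact hBx

/-- Trichotomy for the orbit of `0` under a permutation of `ℤ` commensurating `ℕ`. -/
lemma perm_trichotomy (e : Equiv.Perm ℤ) (hfin : (symmDiff (⇑e '' NN) NN).Finite) :
    (∃ k : ℕ, 0 < k ∧ (e ^ k) 0 = 0) ∨
    (∀ K : ℤ, ∃ N : ℕ, ∀ n : ℕ, N ≤ n → K ≤ (e ^ n) 0) ∨
    (∀ K : ℤ, ∃ N : ℕ, ∀ n : ℕ, N ≤ n → (e ^ n) 0 ≤ K) := by
  by_cases hper : ∃ k : ℕ, 0 < k ∧ (e ^ k) 0 = 0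
  · exact Or.inl hper
  right
  push_neg at hper
  set o : ℕ → ℤ := fun n => (e ^ n) 0 with ho
  have hoinj : Function.Injective o := by
    have key : ∀ a b : ℕ, a < b → o a = o b → False := by
      intro a b hab hoe
      refine hper (b - a) (by omega) ?_
      have h1 : (e ^ b) 0 = (e ^ a) ((e ^ (b - a)) 0) := by
        rw [← Equiv.Perm.mul_apply, ← pow_add]
        congr 2
        omega
      have h2 : (e ^ a) ((e ^ (b - a)) 0) = (e ^ a) 0 := by rw [← h1]; exact hoe.symm
      have := (e ^ a).injective h2
      simpa using this
    intro a b hab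
    by_contra hne
    rcases lt_or_gt_of_ne hne with hlt | hlt
    · exact key a b hlt hab
    · exact key b a hlt hab.symm
  have hD : (⇑e ⁻¹' (symmDiff (⇑e '' NN) NN)).Finite := hfin.preimage e.injective.injOn
  have hsign : ∀ n : ℤ, n ∉ ⇑e ⁻¹' (symmDiff (⇑e '' NN) NN) → (0 ≤ n ↔ 0 ≤ e n) := by
    intro n hn
    constructor
    · intro h0
      by_contra hneg
      refine hn ?_
      rw [Set.mem_preimage, Set.mem_symmDiff]
      exact Or.inl ⟨⟨n, h0, rfl⟩, fun hc => hneg hc⟩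
    · intro h0
      by_contra hneg
      refine hn ?_
      rw [Set.mem_preimage, Set.mem_symmDiff]
      refine Or.inr ⟨h0, ?_⟩
      rintro ⟨m, hm, hme⟩
      have := e.injective hme
      subst this
      exact hneg hm
  have hleave : ∀ F : Set ℤ, F.Finite → ∃ N : ℕ, ∀ n : ℕ, N ≤ n → o n ∉ F := by
    intro F hF
    have hpre : (o ⁻¹' F).Finite := hF.preimage hoinj.injOn
    obtain ⟨N, hN⟩ := hpre.bddAbove
    refine ⟨N + 1, fun n hn hmem => ?_⟩
    have := hN hmem
    omega
  obtain ⟨N₁, hN₁⟩ := hleave _ hD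
  have hconst : ∀ n : ℕ, N₁ ≤ n → (0 ≤ o n ↔ 0 ≤ o N₁) := by
    intro n hn
    induction n, hn using Nat.le_induction with
    | base => rfl
    | succ k hk ih =>
        have ho1 : o (k + 1) = e (o k) := by
          show (e ^ (k + 1)) 0 = e ((e ^ k) 0)
          rw [pow_succ']
          rfl
        rw [ho1, ← hsign (o k) (hN₁ k hk), ih]
  by_cases hpos : 0 ≤ o N₁
  · left
    intro K
    obtain ⟨N₂, hN₂⟩ := hleave (Set.Icc 0 (K - 1)) (Set.finite_Icc _ _)
    refine ⟨max N₁ N₂, fun n hn => ?_⟩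
    have h1 : 0 ≤ o n := (hconst n (le_trans (le_max_left _ _) hn)).2 hpos
    have h2 : o n ∉ Set.Icc 0 (K - 1) := hN₂ n (le_trans (le_max_right _ _) hn)
    rw [Set.mem_Icc] at h2
    show K ≤ o n
    omega
  · right
    intro K
    obtain ⟨N₂, hN₂⟩ := hleave (Set.Icc K (-1)) (Set.finite_Icc _ _)
    refine ⟨max N₁ N₂, fun n hn => ?_⟩
    have h1 : ¬ 0 ≤ o n := fun hc => hpos ((hconst n (le_trans (le_max_left _ _) hn)).1 hc)
    have h2 : o n ∉ Set.Icc K (-1) := hN₂ n (le_trans (le_max_right _ _) hn)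
    rw [Set.mem_Icc] at h2
    show o n ≤ K
    omega

/- ### The periodic / almost-positive parts and the good set -/

/-- Points with finite (periodic) `S`-orbit. -/
def perSet (S : Y ≃ᵐ Y) : Set Y := {x | ∃ k : ℕ, 0 < k ∧ (S ^ k) x = x}

/-- Almost positive points (in `T`-coordinates based at `x`). -/
def posCond (T S : Y ≃ᵐ Y) : Set Y :=
  {x | ∀ K : ℤ, ∃ N : ℕ, ∀ n : ℕ, N ≤ n → ∀ m : ℤ, (S ^ n) x = (T ^ m) x → K ≤ m}

/-- Almost negative points (in `T`-coordinates based at `x`). -/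
def negCond (T S : Y ≃ᵐ Y) : Set Y :=
  {x | ∀ K : ℤ, ∃ N : ℕ, ∀ n : ℕ, N ≤ n → ∀ m : ℤ, (S ^ n) x = (T ^ m) x → m ≤ K}

/-- A set of points where all pointwise dynamical properties needed for the proof hold. -/
structure GoodSet (T S : Y ≃ᵐ Y) (G : Set Y) : Prop where
  tinv : ∀ x ∈ G, ∀ n : ℤ, (T ^ n) x ∈ G
  uniq : ∀ x ∈ G, ∀ a b : ℤ, (T ^ a) x = (T ^ b) x → a = b
  exS : ∀ x ∈ G, ∃ c : ℤ, S x = (T ^ c) x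
  exS' : ∀ x ∈ G, ∃ c : ℤ, S.symm x = (T ^ c) x
  comm : ∀ x ∈ G, (symmDiff (fwdSet T S x) NN).Finite

variable {T S : Y ≃ᵐ Y} {G : Set Y}

lemma GoodSet.sinv (hG : GoodSet T S G) {x : Y} (hx : x ∈ G) : S x ∈ G := by
  obtain ⟨c, hc⟩ := hG.exS x hx
  rw [hc]
  exact hG.tinv x hx c

lemma GoodSet.sinv' (hG : GoodSet T S G) {x : Y} (hx : x ∈ G) : S.symm x ∈ G := by
  obtain ⟨c, hc⟩ := hG.exS' x hx
  rw [hc]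
  exact hG.tinv x hx c

/-- On the good set, every point is periodic, almost positive, or almost negative. -/
lemma GoodSet.mem_tri (hG : GoodSet T S G) {x : Y} (hx : x ∈ G) :
    x ∈ perSet S ∨ x ∈ posCond T S ∨ x ∈ negCond T S := by
  classical
  have horbit : ∀ n : ℤ, (T ^ n) x ∈ G := hG.tinv x hx
  set σ : ℤ → ℤ := fun n => (hG.exS _ (horbit n)).choose + n with hσdef
  have hσ : ∀ n : ℤ, S ((T ^ n) x) = (T ^ (σ n)) x := by
    intro n
    have hs := (hG.exS _ (horbit n)).choose_spec
    rw [hs, ← zpowAddApply]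
  set τ : ℤ → ℤ := fun n => (hG.exS' _ (horbit n)).choose + n with hτdef
  have hτ : ∀ n : ℤ, S.symm ((T ^ n) x) = (T ^ (τ n)) x := by
    intro n
    have hs := (hG.exS' _ (horbit n)).choose_spec
    rw [hs, ← zpowAddApply]
  have hlr : ∀ n, τ (σ n) = n := by
    intro n
    have h1 : S.symm ((T ^ (σ n)) x) = (T ^ (τ (σ n))) x := hτ _
    have h2 : S.symm ((T ^ (σ n)) x) = (T ^ n) x := by rw [← hσ n, S.symm_apply_apply]
    exact hG.uniq x hx _ _ (by rw [← h1, h2])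
  have hrl : ∀ n, σ (τ n) = n := by
    intro n
    have h1 : S ((T ^ (τ n)) x) = (T ^ (σ (τ n))) x := hσ _
    have h2 : S ((T ^ (τ n)) x) = (T ^ n) x := by rw [← hτ n, S.apply_symm_apply]
    exact hG.uniq x hx _ _ (by rw [← h1, h2])
  set e : Equiv.Perm ℤ := ⟨σ, τ, hlr, hrl⟩ with he
  have hfwd : fwdSet T S x = ⇑e '' NN := by
    ext m
    constructor
    · rintro ⟨n, hn, hmn⟩
      exact ⟨n, hn, hG.uniq x hx (σ n) m (by rw [← hσ n, hmn])⟩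
    · rintro ⟨n, hn, rfl⟩
      exact ⟨n, hn, hσ n⟩
  have horb : ∀ n : ℕ, (S ^ n) x = (T ^ ((e ^ n) 0)) x := by
    intro n
    induction n with
    | zero =>
        show (S ^ 0) x = (T ^ ((e ^ 0) 0)) x
        rw [pow_zero, pow_zero]
        show x = (T ^ ((1 : Equiv.Perm ℤ) 0)) x
        rw [Equiv.Perm.one_apply]
        rw [zpow_zero]
        rfl
    | succ k ih =>
        rw [powSuccApply', ih, hσ]
        have hek : (e ^ (k + 1)) 0 = e ((e ^ k) 0) := by rw [pow_succ']; rfl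
        rw [hek]
        rfl
  rcases perm_trichotomy e (hfwd ▸ hG.comm x hx) with ⟨k, hk, hk0⟩ | hpos | hneg
  · left
    refine ⟨k, hk, ?_⟩
    rw [horb k, hk0, zpow_zero]
    rfl
  · right; left
    intro K
    obtain ⟨N, hN⟩ := hpos K
    refine ⟨N, fun n hn m hm => ?_⟩
    have h2 : m = (e ^ n) 0 := hG.uniq x hx _ _ (by rw [← hm, horb n])
    rw [h2]
    exact hN n hn
  · right; right
    intro K
    obtain ⟨N, hN⟩ := hneg K
    refine ⟨N, fun n hn m hm => ?_⟩
    have h2 : m = (e ^ n) 0 := hG.uniq x hx _ _ (by rw [← hm, horb n])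
    rw [h2]
    exact hN n hn

/-- Stability of a tail condition under `S`. -/
lemma GoodSet.cond_S {P : ℤ → ℤ → Prop} (hP : ∀ K m c : ℤ, P (K + c) (m + c) → P K m)
    (hG : GoodSet T S G) {x : Y} (hx : x ∈ G)
    (hp : ∀ K : ℤ, ∃ N : ℕ, ∀ n : ℕ, N ≤ n → ∀ m : ℤ, (S ^ n) x = (T ^ m) x → P K m) :
    ∀ K : ℤ, ∃ N : ℕ, ∀ n : ℕ, N ≤ n → ∀ m : ℤ, (S ^ n) (S x) = (T ^ m) (S x) → P K m := by
  obtain ⟨c, hc⟩ := hG.exS x hx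
  intro K
  obtain ⟨N, hN⟩ := hp (K + c)
  refine ⟨N, fun n hn m hm => ?_⟩
  have h1 : (S ^ (n + 1)) x = (T ^ (m + c)) x := by
    rw [powSuccApply, hm, hc, ← zpowAddApply]
  exact hP K m c (hN (n + 1) (by omega) (m + c) h1)

/-- Stability of a tail condition under `S⁻¹`. -/
lemma GoodSet.cond_symm {P : ℤ → ℤ → Prop} (hP : ∀ K m c : ℤ, P (K + c) (m + c) → P K m)
    (hG : GoodSet T S G) {x : Y} (hx : x ∈ G)
    (hp : ∀ K : ℤ, ∃ N : ℕ, ∀ n : ℕ, N ≤ n → ∀ m : ℤ, (S ^ n) x = (T ^ m) x → P K m) :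
    ∀ K : ℤ, ∃ N : ℕ, ∀ n : ℕ, N ≤ n → ∀ m : ℤ,
      (S ^ n) (S.symm x) = (T ^ m) (S.symm x) → P K m := by
  obtain ⟨c, hc⟩ := hG.exS' x hx
  intro K
  obtain ⟨N, hN⟩ := hp (K + c)
  refine ⟨N + 1, fun n hn m hm => ?_⟩
  obtain ⟨j, rfl⟩ : ∃ j, n = j + 1 := ⟨n - 1, by omega⟩
  have h1 : (S ^ j) x = (T ^ (m + c)) x := by
    have e1 : (S ^ (j + 1)) (S.symm x) = (S ^ j) x := by
      rw [powSuccApply, S.apply_symm_apply]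
    have e2 : (T ^ m) (S.symm x) = (T ^ (m + c)) x := by rw [hc, ← zpowAddApply]
    rw [← e1, hm, e2]
  exact hP K m c (hN j (by omega) (m + c) h1)

lemma perSet_S (S : Y ≃ᵐ Y) {x : Y} (hx : x ∈ perSet S) : S x ∈ perSet S := by
  obtain ⟨k, hk, hfix⟩ := hx
  refine ⟨k, hk, ?_⟩
  calc (S ^ k) (S x) = S ((S ^ k) x) := by rw [← powSuccApply, powSuccApply']
    _ = S x := by rw [hfix]

lemma perSet_symm (S : Y ≃ᵐ Y) {x : Y} (hx : x ∈ perSet S) : S.symm x ∈ perSet S := by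
  obtain ⟨k, hk, hfix⟩ := hx
  refine ⟨k, hk, ?_⟩
  have hcomm : (S ^ k) * S⁻¹ = S⁻¹ * (S ^ k) := (((Commute.refl S).pow_left k).inv_right).eq
  have : (S ^ k) (S.symm x) = S.symm ((S ^ k) x) := by
    show ((S ^ k) * S⁻¹) x = (S⁻¹ * (S ^ k)) x
    rw [hcomm]
  rw [this, hfix]

/- ### Measurability -/

lemma measurableSet_eqset {Z : Type*} [MeasurableSpace Z] [StandardBorelSpace Z]
    {f g : Z → Z} (hf : Measurable f) (hg : Measurable g) :
    MeasurableSet {x | f x = g x} := by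
  letI := upgradeStandardBorel Z
  exact MeasureTheory.StronglyMeasurable.measurableSet_eq_fun hf.stronglyMeasurable hg.stronglyMeasurable

lemma measurableSet_perSet {Z : Type*} [MeasurableSpace Z] [StandardBorelSpace Z]
    (S : Z ≃ᵐ Z) : MeasurableSet (perSet S) := by
  have hrw : perSet S = ⋃ k : ℕ, {x | 0 < k ∧ (S ^ k) x = x} := by
    ext x; simp [perSet]
  rw [hrw]
  refine MeasurableSet.iUnion fun k => ?_
  by_cases hk : 0 < k
  · have : {x | 0 < k ∧ (S ^ k) x = x} = {x | (S ^ k) x = x} := by ext z; simp [hk]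
    rw [this]
    exact measurableSet_eqset (S ^ k).measurable measurable_id
  · have : {x : Z | 0 < k ∧ (S ^ k) x = x} = ∅ := by ext z; simp [hk]
    rw [this]
    exact MeasurableSet.empty

lemma measurableSet_posCond {Z : Type*} [MeasurableSpace Z] [StandardBorelSpace Z]
    (T S : Z ≃ᵐ Z) : MeasurableSet (posCond T S) := by
  have hrw : posCond T S = ⋂ K : ℤ, ⋃ N : ℕ, ⋂ n : ℕ, ⋂ m : ℤ,
      {x | N ≤ n → (S ^ n) x = (T ^ m) x → K ≤ m} := by
    ext x
    simp only [posCond, Set.mem_setOf_eq, Set.mem_iInter, Set.mem_iUnion]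
    constructor
    · intro hx K
      obtain ⟨N, hN⟩ := hx K
      exact ⟨N, fun n m hn heq => hN n hn m heq⟩
    · intro hx K
      obtain ⟨N, hN⟩ := hx K
      exact ⟨N, fun n hn m heq => hN n m hn heq⟩
  rw [hrw]
  refine MeasurableSet.iInter fun K => MeasurableSet.iUnion fun N =>
    MeasurableSet.iInter fun n => MeasurableSet.iInter fun m => ?_
  by_cases h1 : N ≤ n
  · by_cases h2 : K ≤ m
    · have : {x : Z | N ≤ n → (S ^ n) x = (T ^ m) x → K ≤ m} = Set.univ := by
        ext z; simp [h1, h2]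
      rw [this]; exact MeasurableSet.univ
    · have : {x : Z | N ≤ n → (S ^ n) x = (T ^ m) x → K ≤ m}
          = {x : Z | (S ^ n) x = (T ^ m) x}ᶜ := by
        ext z; simp [h1, h2]
      rw [this]
      exact (measurableSet_eqset (S ^ n).measurable (T ^ m).measurable).compl
  · have : {x : Z | N ≤ n → (S ^ n) x = (T ^ m) x → K ≤ m} = Set.univ := by
      ext z; simp [h1]
    rw [this]; exact MeasurableSet.univ

/- ### The restricted transformation is measure-class preserving and commensurating -/

lemma restrict_mem_MCP (S : MCP ν) (A : Set Y) (hA : MeasurableSet A)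
    (h1 : ∀ x ∈ A, (S : Y ≃ᵐ Y) x ∈ A) (h2 : ∀ x ∈ A, (S : Y ≃ᵐ Y).symm x ∈ A) :
    restrictEquiv (S : Y ≃ᵐ Y) A hA h1 h2 ∈ MCP ν := by
  set R := restrictEquiv (S : Y ≃ᵐ Y) A hA h1 h2 with hR
  constructor
  · refine Measure.AbsolutelyContinuous.mk fun s hs hs0 => ?_
    rw [MeasurableEquiv.map_apply]
    have hsub : ⇑R ⁻¹' s ⊆ ⇑(S : Y ≃ᵐ Y) ⁻¹' s ∪ s := by
      intro x hx
      by_cases hxA : x ∈ A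
      · left
        show (S : Y ≃ᵐ Y) x ∈ s
        rw [← restrictEquiv_apply_of_mem (S : Y ≃ᵐ Y) A hA h1 h2 hxA]
        exact hx
      · right
        show x ∈ s
        rw [← restrictEquiv_apply_of_not_mem (S : Y ≃ᵐ Y) A hA h1 h2 hxA]
        exact hx
    refine measure_mono_null hsub ?_
    exact measure_union_null ((MCP.qmp ν S).preimage_null hs0) hs0
  · refine Measure.AbsolutelyContinuous.mk fun s hs hs0 => ?_
    rw [MeasurableEquiv.map_apply] at hs0
    have hna : ν (s ∩ Aᶜ) = 0 := by
      refine measure_mono_null ?_ hs0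
      rintro x ⟨hxs, hxA⟩
      show R x ∈ s
      rw [restrictEquiv_apply_of_not_mem (S : Y ≃ᵐ Y) A hA h1 h2 hxA]
      exact hxs
    have ha : ν (s ∩ A) = 0 := by
      have hsub : s ∩ A ⊆ ⇑(S : Y ≃ᵐ Y).symm ⁻¹' (⇑R ⁻¹' s) := by
        rintro x ⟨hxs, hxA⟩
        show R ((S : Y ≃ᵐ Y).symm x) ∈ s
        rw [restrictEquiv_apply_of_mem (S : Y ≃ᵐ Y) A hA h1 h2 (h2 x hxA),
          (S : Y ≃ᵐ Y).apply_symm_apply]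
        exact hxs
      refine measure_mono_null hsub ?_
      exact (MCP.qmp ν S⁻¹).preimage_null hs0
    have hsplit : s = (s ∩ A) ∪ (s ∩ Aᶜ) := (Set.inter_union_compl s A).symm
    rw [hsplit]
    exact measure_union_null ha hna

lemma restrict_commens (hG : GoodSet T S G) (A : Set Y) (hA : MeasurableSet A)
    (h1 : ∀ x ∈ A, S x ∈ A) (h2 : ∀ x ∈ A, S.symm x ∈ A) {x : Y} (hx : x ∈ G) :
    symmDiff (fwdSet T (restrictEquiv S A hA h1 h2) x) NN ⊆ symmDiff (fwdSet T S x) NN := by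
  intro m hm
  rw [Set.mem_symmDiff] at hm ⊢
  rcases hm with ⟨⟨n, hn, heq⟩, hmnotNN⟩ | ⟨hmNN, hmnot⟩
  · by_cases hTA : (T ^ n) x ∈ A
    · refine Or.inl ⟨⟨n, hn, ?_⟩, hmnotNN⟩
      rw [← restrictEquiv_apply_of_mem S A hA h1 h2 hTA]
      exact heq
    · exfalso
      rw [restrictEquiv_apply_of_not_mem S A hA h1 h2 hTA] at heq
      have := hG.uniq x hx n m heq
      exact hmnotNN (this ▸ hn)
  · refine Or.inr ⟨hmNN, ?_⟩
    rintro ⟨n, hn, heq⟩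
    by_cases hTA : (T ^ n) x ∈ A
    · refine hmnot ⟨n, hn, ?_⟩
      rw [restrictEquiv_apply_of_mem S A hA h1 h2 hTA]
      exact heq
    · have hTmA : (T ^ m) x ∉ A := by
        intro hc
        have hb := h2 _ hc
        rw [← heq, S.symm_apply_apply] at hb
        exact hTA hb
      exact hmnot ⟨m, hmNN, restrictEquiv_apply_of_not_mem S A hA h1 h2 hTmA⟩

end Aux

/-- **Proposition.** For aperiodic `T ∈ Aut(X,μ)`, every `S ∈ [T]_com` can be written as
a product `S = S_p S_+ S_-` of elements of `[T]_com` with pairwise disjoint supports, where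
`S_p` is periodic, `S_+` is almost positive and `S_-` is almost negative. -/
theorem commFull_decomposition_periodic_pos_neg [StandardBorelSpace X]
    (μ : Measure X) [IsProbabilityMeasure μ] [NullSingletonClass μ]
    (𝕋 : AutMod μ) (h : AperiodicMod μ 𝕋) (𝕊 : AutMod μ) (h𝕊 : 𝕊 ∈ CommFullSet μ 𝕋) :
    ∃ Sp Spos Sneg : AutMod μ,
      Sp ∈ CommFullSet μ 𝕋 ∧ Spos ∈ CommFullSet μ 𝕋 ∧ Sneg ∈ CommFullSet μ 𝕋 ∧
      𝕊 = Sp * Spos * Sneg ∧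
      PeriodicMod μ Sp ∧ AlmostPosMod μ 𝕋 Spos ∧ AlmostNegMod μ 𝕋 Sneg ∧
      DisjSuppMod μ Sp Spos ∧ DisjSuppMod μ Sp Sneg ∧ DisjSuppMod μ Spos Sneg := by
  classical
  obtain ⟨T₀, hT₀, haper₀⟩ := h
  obtain ⟨T, S, hT, hS, hInFull, hComm⟩ := h𝕊
  have haper : ∀ᵐ x ∂μ, (orbitZ ((T : X ≃ᵐ X)) x).Infinite :=
    aperiodic_transfer T T₀ (hT.trans hT₀.symm) haper₀
  set U : X ≃ᵐ X := (T : X ≃ᵐ X) with hU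
  set V : X ≃ᵐ X := (S : X ≃ᵐ X) with hV
  set B1 : Set X := {x | ¬ ∃ n : ℤ, V x = (U ^ n) x} with hB1
  have hB1null : μ B1 = 0 := MeasureTheory.ae_iff.1 hInFull
  set B2 : Set X := {x | ¬ ∃ n : ℤ, V.symm x = (U ^ n) x} with hB2
  have hB2null : μ B2 = 0 := by
    have hsub : B2 ⊆ ⇑V.symm ⁻¹' B1 := by
      intro x hx
      rw [hB2, Set.mem_setOf_eq] at hx
      rw [Set.mem_preimage, hB1, Set.mem_setOf_eq]
      rintro ⟨n, hn⟩
      rw [V.apply_symm_apply] at hn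
      refine hx ⟨-n, ?_⟩
      have hres : (U ^ (-n)) x = V.symm x := by
        conv_lhs => rw [hn]
        rw [← zpowAddApply, neg_add_cancel, zpow_zero, oneApply]
      exact hres.symm
    exact measure_mono_null hsub ((MCP.qmp μ S⁻¹).preimage_null hB1null)
  set B3 : Set X := {x | ¬ (symmDiff (fwdSet U V x) NN).Finite} with hB3
  have hB3null : μ B3 = 0 := MeasureTheory.ae_iff.1 hComm
  set B4 : Set X := {x | ¬ (orbitZ U x).Infinite} with hB4
  have hB4null : μ B4 = 0 := MeasureTheory.ae_iff.1 haper
  set N0 : Set X := B1 ∪ B2 ∪ B3 ∪ B4 with hN0def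
  have hN0 : μ N0 = 0 := by
    rw [hN0def]
    exact measure_union_null (measure_union_null (measure_union_null hB1null hB2null) hB3null)
      hB4null
  set Nm : Set X := toMeasurable μ N0 with hNm
  have hNmmeas : MeasurableSet Nm := measurableSet_toMeasurable μ N0
  have hNmnull : μ Nm = 0 := by rw [hNm, measure_toMeasurable]; exact hN0
  set G : Set X := ⋂ n : ℤ, (⇑(U ^ n)) ⁻¹' Nmᶜ with hGdef
  have hGmeas : MeasurableSet G :=
    MeasurableSet.iInter fun n => (U ^ n).measurable hNmmeas.compl
  have hGconull : μ Gᶜ = 0 := by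
    rw [hGdef, Set.compl_iInter]
    refine measure_iUnion_null fun n => ?_
    have hcompl : (⇑(U ^ n) ⁻¹' Nmᶜ)ᶜ = ⇑(U ^ n) ⁻¹' Nm := by
      rw [← Set.preimage_compl, compl_compl]
    rw [hcompl]
    exact (MCP.qmp μ (T ^ n)).preimage_null hNmnull
  have hGae : ∀ᵐ x ∂μ, x ∈ G := by
    rw [MeasureTheory.ae_iff]
    exact hGconull
  have hGsub : G ⊆ Nmᶜ := by
    intro x hx
    have hx0 := Set.mem_iInter.1 hx 0
    rw [Set.mem_preimage, zpow_zero] at hx0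
    exact hx0
  have hGN0 : ∀ x ∈ G, x ∉ N0 := fun x hx hc => (hGsub hx) (subset_toMeasurable μ N0 hc)
  have hnot : ∀ x ∈ G, x ∉ B1 ∧ x ∉ B2 ∧ x ∉ B3 ∧ x ∉ B4 := by
    intro x hx
    have hc := hGN0 x hx
    rw [hN0def] at hc
    simp only [Set.mem_union, not_or] at hc
    exact ⟨hc.1.1.1, hc.1.1.2, hc.1.2, hc.2⟩
  have hGT : ∀ x ∈ G, ∀ n : ℤ, (U ^ n) x ∈ G := by
    intro x hx n
    rw [hGdef, Set.mem_iInter]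
    intro k
    have hxk := Set.mem_iInter.1 hx (k + n)
    rw [Set.mem_preimage] at hxk ⊢
    rw [← zpowAddApply]
    exact hxk
  have hGood : GoodSet U V G := by
    constructor
    · exact hGT
    · intro x hx a b hab
      have hinf : (orbitZ U x).Infinite := by
        have h4 := (hnot x hx).2.2.2
        rw [hB4, Set.mem_setOf_eq, not_not] at h4
        exact h4
      exact coord_unique U hinf hab
    · intro x hx
      have h1 := (hnot x hx).1
      rw [hB1, Set.mem_setOf_eq, not_not] at h1
      exact h1
    · intro x hx
      have h2 := (hnot x hx).2.1
      rw [hB2, Set.mem_setOf_eq, not_not] at h2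
      exact h2
    · intro x hx
      have h3 := (hnot x hx).2.2.1
      rw [hB3, Set.mem_setOf_eq, not_not] at h3
      exact h3
  -- the three invariant pieces
  set P : Set X := perSet V with hPdef
  set Apos : Set X := G ∩ (perSet V)ᶜ ∩ posCond U V with hApdef
  set Aneg : Set X := G ∩ (perSet V)ᶜ ∩ (posCond U V)ᶜ with hAndef
  have hPmeas : MeasurableSet P := measurableSet_perSet V
  have hAposmeas : MeasurableSet Apos :=
    (hGmeas.inter hPmeas.compl).inter (measurableSet_posCond U V)
  have hAnegmeas : MeasurableSet Aneg :=
    (hGmeas.inter hPmeas.compl).inter (measurableSet_posCond U V).compl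
  have hP1 : ∀ x ∈ P, V x ∈ P := fun x hx => perSet_S V hx
  have hP2 : ∀ x ∈ P, V.symm x ∈ P := fun x hx => perSet_symm V hx
  have hperS' : ∀ x, x ∉ perSet V → V x ∉ perSet V := by
    intro x hx hc
    have := perSet_symm V hc
    rw [V.symm_apply_apply] at this
    exact hx this
  have hperSymm' : ∀ x, x ∉ perSet V → V.symm x ∉ perSet V := by
    intro x hx hc
    have := perSet_S V hc
    rw [V.apply_symm_apply] at this
    exact hx this
  have hPshift : ∀ K m c : ℤ, K + c ≤ m + c → K ≤ m := fun K m c hx => by omega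
  have hApos1 : ∀ x ∈ Apos, V x ∈ Apos := by
    rintro x ⟨⟨hxG, hxP⟩, hxpos⟩
    exact ⟨⟨hGood.sinv hxG, hperS' x hxP⟩, hGood.cond_S hPshift hxG hxpos⟩
  have hApos2 : ∀ x ∈ Apos, V.symm x ∈ Apos := by
    rintro x ⟨⟨hxG, hxP⟩, hxpos⟩
    exact ⟨⟨hGood.sinv' hxG, hperSymm' x hxP⟩, hGood.cond_symm hPshift hxG hxpos⟩
  have hAneg1 : ∀ x ∈ Aneg, V x ∈ Aneg := by
    rintro x ⟨⟨hxG, hxP⟩, hxnpos⟩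
    refine ⟨⟨hGood.sinv hxG, hperS' x hxP⟩, fun hc => hxnpos ?_⟩
    have := hGood.cond_symm hPshift (hGood.sinv hxG) hc
    rwa [V.symm_apply_apply] at this
  have hAneg2 : ∀ x ∈ Aneg, V.symm x ∈ Aneg := by
    rintro x ⟨⟨hxG, hxP⟩, hxnpos⟩
    refine ⟨⟨hGood.sinv' hxG, hperSymm' x hxP⟩, fun hc => hxnpos ?_⟩
    have := hGood.cond_S hPshift (hGood.sinv' hxG) hc
    rwa [V.apply_symm_apply] at this
  set Rp : X ≃ᵐ X := restrictEquiv V P hPmeas hP1 hP2 with hRp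
  set Rpos : X ≃ᵐ X := restrictEquiv V Apos hAposmeas hApos1 hApos2 with hRpos
  set Rneg : X ≃ᵐ X := restrictEquiv V Aneg hAnegmeas hAneg1 hAneg2 with hRneg
  set SpM : MCP μ := ⟨Rp, restrict_mem_MCP S P hPmeas hP1 hP2⟩ with hSpM
  set SposM : MCP μ := ⟨Rpos, restrict_mem_MCP S Apos hAposmeas hApos1 hApos2⟩ with hSposM
  set SnegM : MCP μ := ⟨Rneg, restrict_mem_MCP S Aneg hAnegmeas hAneg1 hAneg2⟩ with hSnegM
  -- commensurating full group membership
  have hCFS : ∀ (W : MCP μ) (A : Set X) (hA : MeasurableSet A)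
      (h1 : ∀ x ∈ A, V x ∈ A) (h2 : ∀ x ∈ A, V.symm x ∈ A),
      (W : X ≃ᵐ X) = restrictEquiv V A hA h1 h2 → toMod μ W ∈ CommFullSet μ 𝕋 := by
    intro W A hA h1 h2 hWeq
    refine ⟨T, W, hT, rfl, ?_, ?_⟩
    · filter_upwards [hGae] with x hxG
      by_cases hxA : x ∈ A
      · obtain ⟨c, hc⟩ := hGood.exS x hxG
        refine ⟨c, ?_⟩
        rw [hWeq, restrictEquiv_apply_of_mem V A hA h1 h2 hxA]
        exact hc
      · refine ⟨0, ?_⟩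
        rw [hWeq, restrictEquiv_apply_of_not_mem V A hA h1 h2 hxA, zpow_zero]
        rfl
    · filter_upwards [hGae] with x hxG
      have hsub := restrict_commens hGood A hA h1 h2 hxG
      rw [← hWeq] at hsub
      exact (hGood.comm x hxG).subset hsub
  refine ⟨toMod μ SpM, toMod μ SposM, toMod μ SnegM, ?_, ?_, ?_, ?_, ?_, ?_, ?_, ?_, ?_, ?_⟩
  · exact hCFS SpM P hPmeas hP1 hP2 rfl
  · exact hCFS SposM Apos hAposmeas hApos1 hApos2 rfl
  · exact hCFS SnegM Aneg hAnegmeas hAneg1 hAneg2 rfl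
  · -- 𝕊 = Sp * Spos * Sneg
    rw [← hS]
    have hmul : toMod μ SpM * toMod μ SposM * toMod μ SnegM
        = toMod μ (SpM * SposM * SnegM) := rfl
    rw [hmul]
    apply toMod_eq_of_ae
    filter_upwards [hGae] with x hxG
    show V x = Rp (Rpos (Rneg x))
    by_cases hxP : x ∈ P
    · have h1 : x ∉ Aneg := fun hc => hc.1.2 hxP
      have h2 : x ∉ Apos := fun hc => hc.1.2 hxP
      rw [hRneg, restrictEquiv_apply_of_not_mem V Aneg hAnegmeas hAneg1 hAneg2 h1,
        hRpos, restrictEquiv_apply_of_not_mem V Apos hAposmeas hApos1 hApos2 h2,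
        hRp, restrictEquiv_apply_of_mem V P hPmeas hP1 hP2 hxP]
    · by_cases hxpos : x ∈ posCond U V
      · have hxApos : x ∈ Apos := ⟨⟨hxG, hxP⟩, hxpos⟩
        have h1 : x ∉ Aneg := fun hc => hc.2 hxpos
        rw [hRneg, restrictEquiv_apply_of_not_mem V Aneg hAnegmeas hAneg1 hAneg2 h1,
          hRpos, restrictEquiv_apply_of_mem V Apos hAposmeas hApos1 hApos2 hxApos]
        have h3 : V x ∉ P := (hApos1 x hxApos).1.2
        rw [hRp, restrictEquiv_apply_of_not_mem V P hPmeas hP1 hP2 h3]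
      · have hxAneg : x ∈ Aneg := ⟨⟨hxG, hxP⟩, hxpos⟩
        rw [hRneg, restrictEquiv_apply_of_mem V Aneg hAnegmeas hAneg1 hAneg2 hxAneg]
        have h2 : V x ∉ Apos := fun hc => (hAneg1 x hxAneg).2 hc.2
        rw [hRpos, restrictEquiv_apply_of_not_mem V Apos hAposmeas hApos1 hApos2 h2]
        have h3 : V x ∉ P := (hAneg1 x hxAneg).1.2
        rw [hRp, restrictEquiv_apply_of_not_mem V P hPmeas hP1 hP2 h3]
  · -- periodicity of Sp
    refine ⟨SpM, rfl, Filter.Eventually.of_forall fun x => ?_⟩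
    show (orbitZ Rp x).Finite
    by_cases hxP : x ∈ P
    · obtain ⟨k, hk, hfix⟩ := id hxP
      have hnat : (Rp ^ k) x = (V ^ k) x :=
        (restrictEquiv_pow_of_mem V P hPmeas hP1 hP2 hxP k).1
      have hRfix : (Rp ^ (k : ℤ)) x = x := by
        rw [zpow_natCast, hnat, hfix]
      exact orbit_finite_of_period Rp (by exact_mod_cast hk) hRfix
    · have hfix : Rp x = x := by
        rw [hRp]
        exact restrictEquiv_apply_of_not_mem V P hPmeas hP1 hP2 hxP
      refine (Set.finite_singleton x).subset ?_
      rintro y ⟨n, rfl⟩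
      rw [zpow_fix Rp hfix n]
      exact Set.mem_singleton x
  · -- almost positivity of Spos
    refine ⟨T, SposM, hT, rfl, ?_⟩
    filter_upwards [hGae] with x hxG hmove
    have hxApos : x ∈ Apos := by
      by_contra hc
      exact hmove (restrictEquiv_apply_of_not_mem V Apos hAposmeas hApos1 hApos2 hc)
    intro K
    obtain ⟨N, hN⟩ := hxApos.2 K
    refine ⟨N, fun n hn m hm => ?_⟩
    have hpow : (Rpos ^ n) x = (V ^ n) x :=
      (restrictEquiv_pow_of_mem V Apos hAposmeas hApos1 hApos2 hxApos n).1
    refine hN n hn m ?_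
    rw [← hpow]
    exact hm
  · -- almost negativity of Sneg
    refine ⟨T, SnegM, hT, rfl, ?_⟩
    filter_upwards [hGae] with x hxG hmove
    have hxAneg : x ∈ Aneg := by
      by_contra hc
      exact hmove (restrictEquiv_apply_of_not_mem V Aneg hAnegmeas hAneg1 hAneg2 hc)
    have hxneg : x ∈ negCond U V := by
      rcases hGood.mem_tri hxG with hper | hpos | hneg
      · exact absurd hper hxAneg.1.2
      · exact absurd hpos hxAneg.2
      · exact hneg
    intro K
    obtain ⟨N, hN⟩ := hxneg K
    refine ⟨N, fun n hn m hm => ?_⟩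
    have hpow : (Rneg ^ n) x = (V ^ n) x :=
      (restrictEquiv_pow_of_mem V Aneg hAnegmeas hAneg1 hAneg2 hxAneg n).1
    refine hN n hn m ?_
    rw [← hpow]
    exact hm
  · -- disjoint supports: Sp / Spos
    refine ⟨SpM, SposM, rfl, rfl, ?_⟩
    refine measure_mono_null (?_ : _ ⊆ (∅ : Set X)) measure_empty
    rintro x ⟨hx1, hx2⟩
    have hxP : x ∈ P := by
      by_contra hc
      exact hx1 (restrictEquiv_apply_of_not_mem V P hPmeas hP1 hP2 hc)
    have hxApos : x ∈ Apos := by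
      by_contra hc
      exact hx2 (restrictEquiv_apply_of_not_mem V Apos hAposmeas hApos1 hApos2 hc)
    exact hxApos.1.2 hxP
  · -- disjoint supports: Sp / Sneg
    refine ⟨SpM, SnegM, rfl, rfl, ?_⟩
    refine measure_mono_null (?_ : _ ⊆ (∅ : Set X)) measure_empty
    rintro x ⟨hx1, hx2⟩
    have hxP : x ∈ P := by
      by_contra hc
      exact hx1 (restrictEquiv_apply_of_not_mem V P hPmeas hP1 hP2 hc)
    have hxAneg : x ∈ Aneg := by
      by_contra hc
      exact hx2 (restrictEquiv_apply_of_not_mem V Aneg hAnegmeas hAneg1 hAneg2 hc)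
    exact hxAneg.1.2 hxP
  · -- disjoint supports: Spos / Sneg
    refine ⟨SposM, SnegM, rfl, rfl, ?_⟩
    refine measure_mono_null (?_ : _ ⊆ (∅ : Set X)) measure_empty
    rintro x ⟨hx1, hx2⟩
    have hxApos : x ∈ Apos := by
      by_contra hc
      exact hx1 (restrictEquiv_apply_of_not_mem V Apos hAposmeas hApos1 hApos2 hc)
    have hxAneg : x ∈ Aneg := by
      by_contra hc
      exact hx2 (restrictEquiv_apply_of_not_mem V Aneg hAnegmeas hAneg1 hAneg2 hc)
    exact hxAneg.2 hxApos.2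


end CfgPaper
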